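/- In the centipede game with m = 2n decision nodes (n ≥ 1), if τ* is a best response of player 2 to player 1's mixed strategy σ (i.e., τ* maximizes Eu₂(σ, ·) over all mixed strategies of player 2), then Eu₂(σ, τ*) ≥ 4 − 3·σ(0). -/

import Mathlib

open Finset

/-- Player 1's payoff in the reduced normal form of the centipede game with
`m = 2n` decision nodes.  Strategy `a < n` means "stop at own `(a+1)`-th node";
`a = n` means "always continue". -/
noncomputable def u1 (n : ℕ) (a b : Fin (n + 1)) : ℝ :=
  if a ≤ b ∧ (a : ℕ) < n then 2 * ((a : ℕ) + 1)
  else if b < a then 2 * ((b : ℕ) + 1) - 1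
  else 2 * n + 2

/-- Player 2's payoff in the reduced normal form of the centipede game. -/
noncomputable def u2 (n : ℕ) (a b : Fin (n + 1)) : ℝ :=
  if a ≤ b ∧ (a : ℕ) < n then 2 * ((a : ℕ) + 1) - 1
  else if b < a then 2 * ((b : ℕ) + 1) + 2
  else 2 * n + 1

/-- A mixed strategy: a probability vector on `Fin (n+1)`. -/
def IsMixed {n : ℕ} (σ : Fin (n + 1) → ℝ) : Prop :=
  (∀ a, 0 ≤ σ a) ∧ ∑ a, σ a = 1

/-- Expected payoff under mixed strategies `σ` (player 1) and `τ` (player 2). -/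
noncomputable def Eu {n : ℕ} (u : Fin (n + 1) → Fin (n + 1) → ℝ)
    (σ τ : Fin (n + 1) → ℝ) : ℝ :=
  ∑ a, ∑ b, σ a * τ b * u a b

/-- `(σ, τ)` is a (mixed) Nash equilibrium. -/
def IsNash (n : ℕ) (σ τ : Fin (n + 1) → ℝ) : Prop :=
  IsMixed σ ∧ IsMixed τ ∧
    (∀ σ', IsMixed σ' → Eu (u1 n) σ' τ ≤ Eu (u1 n) σ τ) ∧
    (∀ τ', IsMixed τ' → Eu (u2 n) σ τ' ≤ Eu (u2 n) σ τ)

/-- The point mass on the pure strategy `a0`. -/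
noncomputable def delta {n : ℕ} (a0 : Fin (n + 1)) : Fin (n + 1) → ℝ :=
  fun a => if a = a0 then 1 else 0

/-!
Against any `σ`, player 2 can guarantee `4 - 3 σ(0)` by stopping at her first node: she
gets `1` when player 1 stops immediately and `4` otherwise. A best response does at least
as well.
-/

theorem isMixed_delta {n : ℕ} (a0 : Fin (n + 1)) : IsMixed (delta a0) := by
  refine ⟨fun a => ?_, by simp [delta]⟩
  unfold delta
  split_ifs <;> norm_num

theorem Eu_delta_right {n : ℕ} (u : Fin (n + 1) → Fin (n + 1) → ℝ) (σ : Fin (n + 1) → ℝ)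
    (b0 : Fin (n + 1)) : Eu u σ (delta b0) = ∑ a, σ a * u a b0 := by
  unfold Eu delta
  refine sum_congr rfl fun a _ => ?_
  simp

theorem u2_zero_zero {n : ℕ} (hn : 1 ≤ n) : u2 n 0 0 = 1 := by
  rw [u2, if_pos ⟨le_rfl, by simp only [Fin.val_zero]; omega⟩]
  norm_num

theorem u2_succ_zero {n : ℕ} (i : Fin n) : u2 n i.succ 0 = 4 := by
  rw [u2, if_neg (fun h => (Fin.succ_pos i).not_ge h.1), if_pos (Fin.succ_pos i)]
  norm_num

theorem Eu_u2_delta_zero {n : ℕ} (hn : 1 ≤ n) {σ : Fin (n + 1) → ℝ} (hσ : ∑ a, σ a = 1) :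
    Eu (u2 n) σ (delta 0) = 4 - 3 * σ 0 := by
  rw [Fin.sum_univ_succ] at hσ
  rw [Eu_delta_right, Fin.sum_univ_succ, u2_zero_zero hn]
  simp only [u2_succ_zero, ← sum_mul]
  linarith

theorem best_response_payoff_lower_bound_general (n : ℕ) (hn : 1 ≤ n)
    (σ τstar : Fin (n + 1) → ℝ) (hσ : IsMixed σ)
    (hbr : ∀ τ', IsMixed τ' → Eu (u2 n) σ τ' ≤ Eu (u2 n) σ τstar) :
    Eu (u2 n) σ τstar ≥ 4 - 3 * σ 0 :=
  Eu_u2_delta_zero hn hσ.2 ▸ hbr _ (isMixed_delta 0)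

/-- If `τ*` is a best response of player 2 to player 1's mixed
strategy `σ`, then `Eu₂(σ, τ*) ≥ 4 − 3·σ(0)`. -/
theorem best_response_payoff_lower_bound (n : ℕ) (hn : 1 ≤ n)
    (σ τstar : Fin (n + 1) → ℝ) (hσ : IsMixed σ) (hτ : IsMixed τstar)
    (hbr : ∀ τ', IsMixed τ' → Eu (u2 n) σ τ' ≤ Eu (u2 n) σ τstar) :
    Eu (u2 n) σ τstar ≥ 4 - 3 * σ 0 :=
  best_response_payoff_lower_bound_general n hn σ τstar hσ hbr
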